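/- arXiv:1210.0196 — 7 statements merged into one kernel-verified Lean document; each statement's English description precedes it below -/
import Mathlib

section
/- Let (F, C) be a complete cotorsion pair in an abelian category A. Then the following are equivalent: (1) (F, C) is hereditary; (2) (F, C) is resolving; (3) (F, C) is coresolving. -/
open CategoryTheory CategoryTheory.Limits

universe w v u

variable {A : Type u} [Category.{v} A] [Abelian A]

/-- `IsShortExact i p` asserts that `0 → X → Y → Z → 0` is a short exact sequence. -/
def IsShortExact {X Y Z : A} (i : X ⟶ Y) (p : Y ⟶ Z) : Prop :=
  ∃ w : i ≫ p = 0, (ShortComplex.mk i p w).ShortExact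

section Ext

variable [HasExt.{w} A]

/-- `Ext¹(X, Y) = 0`. -/
def Ext1Zero (X Y : A) : Prop := Subsingleton (Abelian.Ext X Y 1)

/-- `(F, C)` is a cotorsion pair: each class is the `Ext¹`-orthogonal of the other. -/
def IsCotorsionPair (F C : Set A) : Prop :=
  (∀ X : A, X ∈ F ↔ ∀ Y ∈ C, Ext1Zero.{w} X Y) ∧
  (∀ Y : A, Y ∈ C ↔ ∀ X ∈ F, Ext1Zero.{w} X Y)

/-- A complete cotorsion pair: for every object `X` there are short exact sequences
`0 → C → F → X → 0` and `0 → X → C' → F' → 0` with `F, F'` in the left class and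
`C, C'` in the right class. -/
def IsCompleteCotorsionPair (F C : Set A) : Prop :=
  IsCotorsionPair.{w} F C ∧
  (∀ X : A, ∃ (Co Fo : A) (i : Co ⟶ Fo) (p : Fo ⟶ X),
    Co ∈ C ∧ Fo ∈ F ∧ IsShortExact i p) ∧
  (∀ X : A, ∃ (Co Fo : A) (i : X ⟶ Co) (p : Co ⟶ Fo),
    Co ∈ C ∧ Fo ∈ F ∧ IsShortExact i p)

end Ext

/-- A thick class: closed under direct summands (retracts) and satisfying two-out-of-three
for short exact sequences. -/
def IsThickClass (W : Set A) : Prop :=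
  (∀ (X Y : A) (s : Y ⟶ X) (r : X ⟶ Y), s ≫ r = 𝟙 Y → X ∈ W → Y ∈ W) ∧
  (∀ ⦃X Y Z : A⦄ (i : X ⟶ Y) (p : Y ⟶ Z), IsShortExact i p →
    (X ∈ W → Y ∈ W → Z ∈ W) ∧ (X ∈ W → Z ∈ W → Y ∈ W) ∧ (Y ∈ W → Z ∈ W → X ∈ W))

/-- The class `F` is closed under kernels of epimorphisms between objects of `F`. -/
def ClosedUnderKernelsOfEpis (F : Set A) : Prop :=
  ∀ ⦃X Y Z : A⦄ (i : X ⟶ Y) (p : Y ⟶ Z), IsShortExact i p → Y ∈ F → Z ∈ F → X ∈ F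

/-- The class `C` is closed under cokernels of monomorphisms between objects of `C`. -/
def ClosedUnderCokernelsOfMonos (C : Set A) : Prop :=
  ∀ ⦃X Y Z : A⦄ (i : X ⟶ Y) (p : Y ⟶ Z), IsShortExact i p → X ∈ C → Y ∈ C → Z ∈ C

/-- An injective cotorsion pair: a complete cotorsion pair `(W, F)` with `W` thick and
`W ∩ F` equal to the class of injective objects. -/
def IsInjectiveCotorsionPair [HasExt.{w} A] (W F : Set A) : Prop :=
  IsCompleteCotorsionPair.{w} W F ∧ IsThickClass W ∧
  ∀ X : A, (X ∈ W ∧ X ∈ F) ↔ Injective X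

/-- A projective cotorsion pair: a complete cotorsion pair `(C, W)` with `W` thick and
`C ∩ W` equal to the class of projective objects. -/
def IsProjectiveCotorsionPair [HasExt.{w} A] (C W : Set A) : Prop :=
  IsCompleteCotorsionPair.{w} C W ∧ IsThickClass W ∧
  ∀ X : A, (X ∈ C ∧ X ∈ W) ↔ Projective X

/-- A Hovey triple `(Q, W, R)`: `W` is thick and both `(Q, W ∩ R)` and `(Q ∩ W, R)` are
complete cotorsion pairs. -/
def IsHoveyTriple [HasExt.{w} A] (Q W R : Set A) : Prop :=
  IsThickClass W ∧ IsCompleteCotorsionPair.{w} Q (W ∩ R) ∧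
    IsCompleteCotorsionPair.{w} (Q ∩ W) R

section Proof

open Abelian

variable [HasExt.{w} A]

lemma ext1_eq_zero {X Y : A} (h : Ext1Zero.{w} X Y) (x : Abelian.Ext.{w} X Y 1) : x = 0 :=
  @Subsingleton.elim _ h x 0

lemma aux_res_to_cores (F C : Set A) (h : IsCompleteCotorsionPair.{w} F C)
    (hF : ClosedUnderKernelsOfEpis F) : ClosedUnderCokernelsOfMonos C := by
  rintro X Y Z i p ⟨w, hS⟩ hX hY
  rw [h.1.2]
  intro G hG
  have key : ∀ ξ : Abelian.Ext.{w} G Z 1, ξ = 0 := by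
    intro ξ
    -- approximate Z: 0 → Z → Co → Fo → 0
    obtain ⟨Co, Fo, j, q, hCo, hFo, wU, hU⟩ := h.2.2 Z
    -- ξ dies in Ext¹(G, Co)
    have hξj : ξ.comp (Ext.mk₀ j) (add_zero 1) = 0 :=
      ext1_eq_zero ((h.1.1 G).mp hG Co hCo) _
    obtain ⟨ψ, hψ⟩ := Ext.covariant_sequence_exact₁ G hU ξ hξj (zero_add 1)
    -- approximate Co: σ : F₃ ↠ Co
    obtain ⟨C₃, F₃, i₃, σ, hC₃, hF₃, wV₀, hV₀⟩ := h.2.1 Co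
    haveI : Epi σ := hV₀.epi_g
    haveI : Epi q := hU.epi_g
    set τ : F₃ ⟶ Fo := σ ≫ q with hτ
    haveI : Epi τ := epi_comp σ q
    set L := kernel τ
    have wV : kernel.ι τ ≫ τ = 0 := kernel.condition τ
    have hV : (ShortComplex.mk (kernel.ι τ) τ wV).ShortExact :=
      ShortComplex.ShortExact.mk'
        (ShortComplex.exact_of_f_is_kernel _ (kernelIsKernel τ)) inferInstance inferInstance
    have hL : L ∈ F := hF (kernel.ι τ) τ ⟨wV, hV⟩ hF₃ hFo
    -- extClass of U pulls back to zero on F₃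
    have hτθ : (Ext.mk₀ τ).comp hU.extClass (zero_add 1) = 0 := by
      rw [hτ, ← Ext.mk₀_comp_mk₀, Ext.comp_assoc_of_second_deg_zero,
        hU.comp_extClass, Ext.comp_zero]
    obtain ⟨χ, hχ⟩ := Ext.contravariant_sequence_exact₃ (n₀ := 0) hV Z hU.extClass hτθ rfl
    -- χ.comp η = 0 since L ∈ F, X ∈ C
    have hχη : χ.comp hS.extClass (zero_add 1) = 0 :=
      ext1_eq_zero ((h.1.1 L).mp hL X hX) _
    have hδξ : ξ.comp hS.extClass (by omega : 1 + 1 = 2) = 0 := by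
      rw [← hψ, ← hχ]
      rw [Ext.comp_assoc (a₂₃ := 2) ψ _ hS.extClass (zero_add 1) rfl (by omega),
        Ext.comp_assoc (a₂₃ := 1) hV.extClass χ hS.extClass (add_zero 1) (zero_add 1) (by omega),
        hχη, Ext.comp_zero, Ext.comp_zero]
    obtain ⟨x₂, hx₂⟩ := Ext.covariant_sequence_exact₃ G hS ξ (by omega) hδξ
    have : x₂ = 0 := ext1_eq_zero ((h.1.1 G).mp hG Y hY) _
    rw [← hx₂, this, Ext.zero_comp]
  exact ⟨fun a b => by rw [key a, key b]⟩

end Proof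

section Proof2

open Abelian

variable [HasExt.{w} A]

lemma aux_cores_to_res (F C : Set A) (h : IsCompleteCotorsionPair.{w} F C)
    (hC : ClosedUnderCokernelsOfMonos C) : ClosedUnderKernelsOfEpis F := by
  rintro X Y Z i p ⟨w, hS⟩ hY hZ
  rw [h.1.1]
  intro D hD
  have key : ∀ ξ : Abelian.Ext.{w} X D 1, ξ = 0 := by
    intro ξ
    -- approximate X: 0 → C₀ → F₀ → X → 0
    obtain ⟨C₀, F₀, a, π, hC₀, hF₀, wU, hU⟩ := h.2.1 X
    have hπξ : (Ext.mk₀ π).comp ξ (zero_add 1) = 0 :=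
      ext1_eq_zero ((h.1.1 F₀).mp hF₀ D hD) _
    obtain ⟨χ₀, hχ₀⟩ := Ext.contravariant_sequence_exact₃ (n₀ := 0) hU D ξ hπξ rfl
    -- approximate F₀ on the injective side: 0 → F₀ → C₅ → F₅ → 0
    obtain ⟨C₅, F₅, ι, ρ, hC₅, hF₅, wW₀, hW₀⟩ := h.2.2 F₀
    haveI : Mono a := hU.mono_f
    haveI : Mono ι := hW₀.mono_f
    set m : C₀ ⟶ C₅ := a ≫ ι with hm
    haveI : Mono m := mono_comp a ι
    set N := cokernel m
    have wW : m ≫ cokernel.π m = 0 := cokernel.condition m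
    have hW : (ShortComplex.mk m (cokernel.π m) wW).ShortExact :=
      ShortComplex.ShortExact.mk'
        (ShortComplex.exact_of_g_is_cokernel _ (cokernelIsCokernel m)) inferInstance inferInstance
    have hN : N ∈ C := hC m (cokernel.π m) ⟨wW, hW⟩ hC₀ hC₅
    -- extClass of U pushes to zero in Ext¹(X, C₅)
    have hθm : hU.extClass.comp (Ext.mk₀ m) (add_zero 1) = 0 := by
      rw [hm, ← Ext.mk₀_comp_mk₀, ← Ext.comp_assoc_of_third_deg_zero,
        hU.extClass_comp, Ext.zero_comp]
    obtain ⟨μ, hμ⟩ := Ext.covariant_sequence_exact₁ X hW hU.extClass hθm (zero_add 1)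
    -- hS.extClass.comp μ ∈ Ext¹(Z, N) = 0
    have hSμ : hS.extClass.comp μ (add_zero 1) = 0 :=
      ext1_eq_zero ((h.1.2 N).mp hN Z hZ) _
    have hδξ : hS.extClass.comp ξ (by omega : 1 + 1 = 2) = 0 := by
      rw [← hχ₀, ← hμ]
      rw [← Ext.comp_assoc (a₁₂ := 2) hS.extClass _ χ₀ (by omega) (add_zero 1) (by omega),
        ← Ext.comp_assoc (a₁₂ := 1) hS.extClass μ hW.extClass (add_zero 1) (zero_add 1)
          (by omega),
        hSμ, Ext.zero_comp, Ext.zero_comp]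
    obtain ⟨x₂, hx₂⟩ := Ext.contravariant_sequence_exact₁ hS D ξ (by omega) hδξ
    have : x₂ = 0 := ext1_eq_zero ((h.1.2 D).mp hD Y hY) _
    rw [← hx₂, this, Ext.comp_zero]
  exact ⟨fun x y => by rw [key x, key y]⟩

end Proof2

theorem beckers_lemma [HasExt.{w} A] (F C : Set A)
    (h : IsCompleteCotorsionPair.{w} F C) :
    ((ClosedUnderKernelsOfEpis F ∧ ClosedUnderCokernelsOfMonos C) ↔
      ClosedUnderKernelsOfEpis F) ∧
    (ClosedUnderKernelsOfEpis F ↔ ClosedUnderCokernelsOfMonos C) := by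
  refine ⟨⟨fun hh => hh.1, fun hres => ⟨hres, aux_res_to_cores F C h hres⟩⟩,
    ⟨fun hres => aux_res_to_cores F C h hres, fun hcores => aux_cores_to_res F C h hcores⟩⟩
end

section
/- Let (Q, W, R) be a Hovey triple in an abelian category A. Then W = {A ∈ A | there exists a short exact sequence 0 → A → W₂ → W₁ → 0 with W₂ ∈ W ∩ R and W₁ ∈ Q ∩ W} = {A ∈ A | there exists a short exact sequence 0 → W₂ → W₁ → A → 0 with W₂ ∈ W ∩ R and W₁ ∈ Q ∩ W}. Consequently, if V is another class of objects such that (Q, V, R) is also a Hovey triple, then V = W. -/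
open CategoryTheory CategoryTheory.Limits

universe w v u

variable {A : Type u} [Category.{v} A] [Abelian A]

theorem trivial_objects_characterization [HasExt.{w} A] (Q W R : Set A)
    (h : IsHoveyTriple.{w} Q W R) :
    W = {X : A | ∃ (W₂ W₁ : A) (i : X ⟶ W₂) (p : W₂ ⟶ W₁),
        IsShortExact i p ∧ W₂ ∈ W ∩ R ∧ W₁ ∈ Q ∩ W} ∧
    W = {X : A | ∃ (W₂ W₁ : A) (i : W₂ ⟶ W₁) (p : W₁ ⟶ X),
        IsShortExact i p ∧ W₂ ∈ W ∩ R ∧ W₁ ∈ Q ∩ W} ∧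
    ∀ V : Set A, IsHoveyTriple.{w} Q V R → V = W := by
  obtain ⟨hthick, hcp1, hcp2⟩ := h
  have h1 : W = {X : A | ∃ (W₂ W₁ : A) (i : X ⟶ W₂) (p : W₂ ⟶ W₁),
      IsShortExact i p ∧ W₂ ∈ W ∩ R ∧ W₁ ∈ Q ∩ W} := by
    ext X
    constructor
    · intro hX
      obtain ⟨Co, Fo, i, p, hCo, hFo, hses⟩ := hcp1.2.2 X
      exact ⟨Co, Fo, i, p, hses, hCo, hFo, (hthick.2 i p hses).1 hX hCo.1⟩
    · rintro ⟨W₂, W₁, i, p, hses, hW₂, hW₁⟩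
      exact (hthick.2 i p hses).2.2 hW₂.1 hW₁.2
  have h2 : W = {X : A | ∃ (W₂ W₁ : A) (i : W₂ ⟶ W₁) (p : W₁ ⟶ X),
      IsShortExact i p ∧ W₂ ∈ W ∩ R ∧ W₁ ∈ Q ∩ W} := by
    ext X
    constructor
    · intro hX
      obtain ⟨Co, Fo, i, p, hCo, hFo, hses⟩ := hcp2.2.1 X
      exact ⟨Co, Fo, i, p, hses, ⟨(hthick.2 i p hses).2.2 hFo.2 hX, hCo⟩, hFo⟩
    · rintro ⟨W₂, W₁, i, p, hses, hW₂, hW₁⟩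
      exact (hthick.2 i p hses).1 hW₂.1 hW₁.2
  refine ⟨h1, h2, ?_⟩
  intro V hV
  obtain ⟨vthick, vcp1, vcp2⟩ := hV
  have hVR : ∀ X : A, X ∈ V ∩ R ↔ X ∈ W ∩ R := fun X =>
    (vcp1.1.2 X).trans (hcp1.1.2 X).symm
  have hQV : ∀ X : A, X ∈ Q ∩ V ↔ X ∈ Q ∩ W := fun X =>
    (vcp2.1.1 X).trans (hcp2.1.1 X).symm
  ext X
  constructor
  · intro hX
    obtain ⟨Co, Fo, i, p, hCo, hFo, hses⟩ := vcp1.2.2 X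
    have hFoV : Fo ∈ V := (vthick.2 i p hses).1 hX hCo.1
    rw [h1]
    exact ⟨Co, Fo, i, p, hses, (hVR Co).1 hCo, (hQV Fo).1 ⟨hFo, hFoV⟩⟩
  · intro hX
    obtain ⟨Co, Fo, i, p, hCo, hFo, hses⟩ := hcp1.2.2 X
    have hFoW : Fo ∈ W := (hthick.2 i p hses).1 hX hCo.1
    have hCoV : Co ∈ V := ((hVR Co).2 hCo).1
    have hFoV : Fo ∈ V := ((hQV Fo).2 ⟨hFo, hFoW⟩).2
    exact (vthick.2 i p hses).2.2 hCoV hFoV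
end

section
/- Let (W, F) be a complete cotorsion pair in an abelian category A with enough injectives. Then the following are equivalent: (1) W is thick and W ∩ F equals the class of injective objects of A; (2) (W, F) is hereditary and W ∩ F equals the class of injective objects of A; (3) W is thick and W contains all injective objects of A. -/
open CategoryTheory CategoryTheory.Limits

universe w v u

variable {A : Type u} [Category.{v} A] [Abelian A]

/-!
Orthogonality alone makes `W` closed under extensions and retracts, and a short exact sequence
`0 → X → Y → Z → 0` with `Ext¹(Z, X) = 0` splits. Hence, if `W` is thick and contains the
injectives, an object `X ∈ W ∩ F` is a summand of an injective `I ⊇ X`, since `I / X ∈ W`.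

The hereditary closure properties come from completeness. If `W ∩ F` consists of injectives and
`0 → X → Y → Z → 0` is exact with `X, Y ∈ W`, then every map `X → G` with `G ∈ F` extends to the
`F`-envelope `X → C₀` (its cokernel lies in `W`), and `C₀ ∈ W ∩ F` is injective; so the connecting
map `Hom(X, G) → Ext¹(Z, G)` vanishes and `Z ∈ W`. If `W` is closed under kernels of epimorphisms
and `0 → B' → B → C → 0` is exact with `B', B ∈ F`, take the `F`-envelope `0 → C → C₀ → W₀ → 0`
and a `W`-cover `W₁ → C₀`; the kernel `P` of `W₁ → W₀` lies in `W` and maps to `C`, so the class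
of the envelope factors through `P → C`, which lifts to `B` because `Ext¹(P, B') = 0`. As
`Ext¹(W₀, B) = 0`, the envelope splits and `C` is a summand of `C₀ ∈ F`.
-/

lemma shortExact_kernel {Y Z : A} (g : Y ⟶ Z) [Epi g] :
    (ShortComplex.mk (kernel.ι g) g (kernel.condition g)).ShortExact :=
  ShortComplex.ShortExact.mk' (ShortComplex.exact_of_f_is_kernel _ (kernelIsKernel g))
    inferInstance ‹_›

lemma isShortExact_kernel_ι {Y Z : A} (g : Y ⟶ Z) [Epi g] : IsShortExact (kernel.ι g) g :=
  ⟨_, shortExact_kernel g⟩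

lemma isShortExact_cokernel_π {X Y : A} (f : X ⟶ Y) [Mono f] : IsShortExact f (cokernel.π f) :=
  ⟨cokernel.condition f, ShortComplex.ShortExact.mk'
    (ShortComplex.exact_of_g_is_cokernel _ (cokernelIsCokernel f)) ‹_› inferInstance⟩

lemma IsThickClass.closedUnderKernelsOfEpis {W : Set A} (h : IsThickClass W) :
    ClosedUnderKernelsOfEpis W :=
  fun _ _ _ i p hip => (h.2 i p hip).2.2

lemma IsThickClass.closedUnderCokernelsOfMonos {W : Set A} (h : IsThickClass W) :
    ClosedUnderCokernelsOfMonos W :=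
  fun _ _ _ i p hip => (h.2 i p hip).1

section Ext

open Abelian

variable [HasExt.{w} A]

lemma Ext1Zero.eq_zero {X Y : A} (h : Ext1Zero.{w} X Y) (e : Ext X Y 1) : e = 0 :=
  @Subsingleton.elim _ h e 0

lemma ext1Zero_of_forall_eq_zero {X Y : A} (h : ∀ e : Ext X Y 1, e = 0) : Ext1Zero.{w} X Y :=
  subsingleton_of_forall_eq 0 h

lemma ext1Zero_of_injective (X I : A) [Injective I] : Ext1Zero.{w} X I :=
  Ext.subsingleton_of_injective X I 0

lemma ext1Zero_of_retract_left {X X' Y : A} (s : X ⟶ X') (r : X' ⟶ X) (hsr : s ≫ r = 𝟙 X)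
    (h : Ext1Zero.{w} X' Y) : Ext1Zero.{w} X Y :=
  ext1Zero_of_forall_eq_zero fun e => by
    rw [← Ext.mk₀_id_comp e, ← hsr, ← Ext.mk₀_comp_mk₀, Ext.comp_assoc_of_second_deg_zero,
      h.eq_zero ((Ext.mk₀ r).comp e (zero_add 1)), Ext.comp_zero]

lemma ext1Zero_of_retract_right {X Y Y' : A} (s : Y ⟶ Y') (r : Y' ⟶ Y) (hsr : s ≫ r = 𝟙 Y)
    (h : Ext1Zero.{w} X Y') : Ext1Zero.{w} X Y :=
  ext1Zero_of_forall_eq_zero fun e => by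
    rw [← Ext.comp_mk₀_id e, ← hsr, ← Ext.mk₀_comp_mk₀, ← Ext.comp_assoc_of_third_deg_zero,
      h.eq_zero (e.comp (Ext.mk₀ s) (add_zero 1)), Ext.zero_comp]

namespace CategoryTheory.ShortComplex.ShortExact

variable {S : ShortComplex A} (hS : S.ShortExact)
include hS

lemma exists_f_comp_eq {G : A} (φ : S.X₁ ⟶ G)
    (hφ : hS.extClass.comp (Ext.mk₀ φ) (add_zero 1) = 0) : ∃ ψ : S.X₂ ⟶ G, S.f ≫ ψ = φ := by
  obtain ⟨x, hx⟩ := Ext.contravariant_sequence_exact₁ hS G (Ext.mk₀ φ) (add_zero 1) hφ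
  obtain ⟨ψ, rfl⟩ := (Ext.mk₀_bijective S.X₂ G).2 x
  exact ⟨ψ, (Ext.mk₀_bijective _ _).1 (by rwa [Ext.mk₀_comp_mk₀] at hx)⟩

lemma exists_comp_g_eq {G : A} (φ : G ⟶ S.X₃)
    (hφ : (Ext.mk₀ φ).comp hS.extClass (zero_add 1) = 0) : ∃ ψ : G ⟶ S.X₂, ψ ≫ S.g = φ := by
  obtain ⟨x, hx⟩ := Ext.covariant_sequence_exact₃ G hS (Ext.mk₀ φ) (zero_add 1) hφ
  obtain ⟨ψ, rfl⟩ := (Ext.mk₀_bijective G S.X₂).2 x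
  exact ⟨ψ, (Ext.mk₀_bijective _ _).1 (by rwa [Ext.mk₀_comp_mk₀] at hx)⟩

lemma exists_retraction (h : Ext1Zero.{w} S.X₃ S.X₁) : ∃ r : S.X₂ ⟶ S.X₁, S.f ≫ r = 𝟙 S.X₁ :=
  hS.exists_f_comp_eq (𝟙 S.X₁) (h.eq_zero _)

lemma ext1Zero_X₂ {Y : A} (h₁ : Ext1Zero.{w} S.X₁ Y) (h₃ : Ext1Zero.{w} S.X₃ Y) :
    Ext1Zero.{w} S.X₂ Y :=
  ext1Zero_of_forall_eq_zero fun e => by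
    obtain ⟨x₃, rfl⟩ := Ext.contravariant_sequence_exact₂ hS Y e (h₁.eq_zero _)
    rw [h₃.eq_zero x₃, Ext.comp_zero]

/-- Every class in `Ext¹(X₃, G)` is the image of some `X₁ ⟶ G` under the connecting map, which
kills maps factoring through an injective. -/
lemma ext1Zero_X₃_of_factorsThru {I G : A} [Injective I] (c : S.X₁ ⟶ I)
    (hc : ∀ φ : S.X₁ ⟶ G, ∃ ψ : I ⟶ G, c ≫ ψ = φ) (h₂ : Ext1Zero.{w} S.X₂ G) :
    Ext1Zero.{w} S.X₃ G :=
  ext1Zero_of_forall_eq_zero fun e => by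
    obtain ⟨x, rfl⟩ := Ext.contravariant_sequence_exact₃ hS G e (h₂.eq_zero _) (add_zero 1)
    obtain ⟨φ, rfl⟩ := (Ext.mk₀_bijective S.X₁ G).2 x
    obtain ⟨ψ, rfl⟩ := hc φ
    rw [← Ext.mk₀_comp_mk₀, ← Ext.comp_assoc_of_third_deg_zero,
      Ext.eq_zero_of_injective (hS.extClass.comp (Ext.mk₀ c) (add_zero 1)), Ext.zero_comp]

end CategoryTheory.ShortComplex.ShortExact

variable {W F : Set A}

namespace IsCotorsionPair

variable (h : IsCotorsionPair.{w} W F)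
include h

lemma ext1Zero {X Y : A} (hX : X ∈ W) (hY : Y ∈ F) : Ext1Zero.{w} X Y :=
  (h.1 X).1 hX Y hY

lemma mem_left {X : A} (hX : ∀ Y ∈ F, Ext1Zero.{w} X Y) : X ∈ W :=
  (h.1 X).2 hX

lemma mem_right {Y : A} (hY : ∀ X ∈ W, Ext1Zero.{w} X Y) : Y ∈ F :=
  (h.2 Y).2 hY

lemma injective_mem_right (I : A) [Injective I] : I ∈ F :=
  h.mem_right fun X _ => ext1Zero_of_injective X I

lemma mem_left_of_retract {X X' : A} (s : X ⟶ X') (r : X' ⟶ X) (hsr : s ≫ r = 𝟙 X)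
    (hX' : X' ∈ W) : X ∈ W :=
  h.mem_left fun _ hY => ext1Zero_of_retract_left s r hsr (h.ext1Zero hX' hY)

lemma mem_right_of_retract {Y Y' : A} (s : Y ⟶ Y') (r : Y' ⟶ Y) (hsr : s ≫ r = 𝟙 Y)
    (hY' : Y' ∈ F) : Y ∈ F :=
  h.mem_right fun _ hX => ext1Zero_of_retract_right s r hsr (h.ext1Zero hX hY')

lemma mem_left_of_shortExact {S : ShortComplex A} (hS : S.ShortExact) (h₁ : S.X₁ ∈ W)
    (h₃ : S.X₃ ∈ W) : S.X₂ ∈ W :=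
  h.mem_left fun _ hY => hS.ext1Zero_X₂ (h.ext1Zero h₁ hY) (h.ext1Zero h₃ hY)

lemma injective_of_mem [EnoughInjectives A] (hW : ClosedUnderCokernelsOfMonos W)
    (hinj : ∀ I : A, Injective I → I ∈ W) {X : A} (hXW : X ∈ W) (hXF : X ∈ F) : Injective X := by
  have hQ : cokernel (Injective.ι X) ∈ W :=
    hW _ _ (isShortExact_cokernel_π _) hXW (hinj _ inferInstance)
  obtain ⟨_, hS⟩ := isShortExact_cokernel_π (Injective.ι X)
  obtain ⟨r, hr⟩ := hS.exists_retraction (h.ext1Zero hQ hXF)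
  exact (Retract.mk (Injective.ι X) r hr).injective

end IsCotorsionPair

namespace IsCompleteCotorsionPair

variable (h : IsCompleteCotorsionPair.{w} W F)
include h

lemma closedUnderCokernelsOfMonos_left (hinj : ∀ X : A, X ∈ W → X ∈ F → Injective X) :
    ClosedUnderCokernelsOfMonos W := by
  rintro X Y Z i p ⟨_, hS⟩ hX hY
  obtain ⟨C₀, F', c, q, hC₀, hF', _, hT⟩ := h.2.2 X
  have : Injective C₀ := hinj C₀ (h.1.mem_left_of_shortExact hT hX hF') hC₀
  exact h.1.mem_left fun G hG => hS.ext1Zero_X₃_of_factorsThru c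
    (fun φ => hT.exists_f_comp_eq φ ((h.1.ext1Zero hF' hG).eq_zero _)) (h.1.ext1Zero hY hG)

lemma closedUnderCokernelsOfMonos_right (hW : ClosedUnderKernelsOfEpis W) :
    ClosedUnderCokernelsOfMonos F := by
  rintro B' B C i p ⟨_, hS⟩ hB' hB
  obtain ⟨C₀, W₀, c, q, hC₀, hW₀, wξ, hξ⟩ := h.2.2 C
  obtain ⟨_, W₁, _, p₁, -, hW₁, _, hcover⟩ := h.2.1 C₀
  have := hξ.mono_f
  have := hξ.epi_g
  have := hcover.epi_g
  have hP : kernel (p₁ ≫ q) ∈ W := hW _ _ (isShortExact_kernel_ι (p₁ ≫ q)) hW₁ hW₀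
  let π : kernel (p₁ ≫ q) ⟶ C := hξ.exact.lift (kernel.ι _ ≫ p₁) (by simp)
  obtain ⟨ψ, hψ⟩ := hS.exists_comp_g_eq π ((h.1.ext1Zero hP hB').eq_zero _)
  let φ : ShortComplex.mk _ _ (kernel.condition (p₁ ≫ q)) ⟶ ShortComplex.mk c q wξ :=
    { τ₁ := π, τ₂ := p₁, τ₃ := 𝟙 W₀, comm₁₂ := hξ.exact.lift_f _ _ }
  have hξ0 : hξ.extClass = 0 := by
    calc hξ.extClass = (shortExact_kernel (p₁ ≫ q)).extClass.comp (Ext.mk₀ π) (add_zero 1) := by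
          rw [(shortExact_kernel _).extClass_naturality hξ φ, Ext.mk₀_id_comp]
      _ = ((shortExact_kernel (p₁ ≫ q)).extClass.comp (Ext.mk₀ ψ) (add_zero 1)).comp
            (Ext.mk₀ p) (add_zero 1) := by
          rw [Ext.comp_assoc_of_third_deg_zero, Ext.mk₀_comp_mk₀, hψ]
      _ = 0 := by rw [(h.1.ext1Zero hW₀ hB).eq_zero (Ext.comp _ _ _), Ext.zero_comp]
  obtain ⟨r, hr⟩ := hξ.exists_f_comp_eq (𝟙 C) (by rw [hξ0, Ext.zero_comp])
  exact h.1.mem_right_of_retract c r hr hC₀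

lemma isThickClass_left (hW : ClosedUnderKernelsOfEpis W)
    (hinj : ∀ X : A, X ∈ W → X ∈ F → Injective X) : IsThickClass W := by
  refine ⟨fun X Y s r hsr hX => h.1.mem_left_of_retract s r hsr hX, fun X Y Z i p hip =>
    ⟨h.closedUnderCokernelsOfMonos_left hinj i p hip, fun hX hZ => ?_, hW i p hip⟩⟩
  obtain ⟨_, hS⟩ := hip
  exact h.1.mem_left_of_shortExact hS hX hZ

end IsCompleteCotorsionPair

end Ext

theorem injective_cotorsion_pair_characterizations [EnoughInjectives A] [HasExt.{w} A]
    (W F : Set A) (h : IsCompleteCotorsionPair.{w} W F) :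
    ((IsThickClass W ∧ ∀ X : A, (X ∈ W ∧ X ∈ F) ↔ Injective X) ↔
      ((ClosedUnderKernelsOfEpis W ∧ ClosedUnderCokernelsOfMonos F) ∧
        ∀ X : A, (X ∈ W ∧ X ∈ F) ↔ Injective X)) ∧
    ((IsThickClass W ∧ ∀ X : A, (X ∈ W ∧ X ∈ F) ↔ Injective X) ↔
      (IsThickClass W ∧ ∀ X : A, Injective X → X ∈ W)) := by
  refine ⟨⟨?_, ?_⟩, ⟨?_, ?_⟩⟩
  · rintro ⟨hthick, hinj⟩
    exact ⟨⟨hthick.closedUnderKernelsOfEpis,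
      h.closedUnderCokernelsOfMonos_right hthick.closedUnderKernelsOfEpis⟩, hinj⟩
  · rintro ⟨⟨hker, -⟩, hinj⟩
    exact ⟨h.isThickClass_left hker fun X hX hF => (hinj X).1 ⟨hX, hF⟩, hinj⟩
  · rintro ⟨hthick, hinj⟩
    exact ⟨hthick, fun X hX => ((hinj X).2 hX).1⟩
  · rintro ⟨hthick, hinjW⟩
    refine ⟨hthick, fun X => ⟨fun ⟨hXW, hXF⟩ => ?_, fun hX => ⟨hinjW X hX, ?_⟩⟩⟩
    · exact h.1.injective_of_mem hthick.closedUnderCokernelsOfMonos hinjW hXW hXF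
    · exact h.1.injective_mem_right X
end

section
/- Let A be an abelian category with enough injectives and let (W, F) be an injective cotorsion pair. Then every object of finite injective dimension lies in W, i.e. if M admits an exact sequence 0 → M → I⁰ → I¹ → ⋯ → Iⁿ → 0 with every Iᵏ injective, then M ∈ W. If moreover A has enough projectives, then every object of finite projective dimension also lies in W. -/
open CategoryTheory CategoryTheory.Limits

universe w v u

variable {A : Type u} [Category.{v} A] [Abelian A]

/-- `M` admits an exact sequence `0 → M → I⁰ → I¹ → ⋯ → Iⁿ → 0` with each `Iᵏ` injective. -/
def HasFiniteInjectiveDimension (M : A) : Prop :=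
  ∃ (n : ℕ) (J : CochainComplex A ℕ) (ι : M ⟶ J.X 0),
    (∀ k ≤ n, Injective (J.X k)) ∧ (∀ k, n < k → IsZero (J.X k)) ∧
    Mono ι ∧ (∃ w : ι ≫ J.d 0 1 = 0, (ShortComplex.mk ι (J.d 0 1) w).Exact) ∧
    (∀ k : ℕ, (ShortComplex.mk (J.d k (k + 1)) (J.d (k + 1) (k + 2)) (J.d_comp_d _ _ _)).Exact)

/-- `M` admits an exact sequence `0 → Pⁿ → ⋯ → P¹ → P⁰ → M → 0` with each `Pᵏ` projective. -/
def HasFiniteProjectiveDimension (M : A) : Prop :=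
  ∃ (n : ℕ) (P : ChainComplex A ℕ) (π : P.X 0 ⟶ M),
    (∀ k ≤ n, Projective (P.X k)) ∧ (∀ k, n < k → IsZero (P.X k)) ∧
    Epi π ∧ (∃ w : P.d 1 0 ≫ π = 0, (ShortComplex.mk (P.d 1 0) π w).Exact) ∧
    (∀ k : ℕ, (ShortComplex.mk (P.d (k + 2) (k + 1)) (P.d (k + 1) k) (P.d_comp_d _ _ _)).Exact)

/-!
Every injective lies in `W` because `W ∩ F` is the class of injectives, and every projective
lies in `W` because it is a retract of the `W`-object covering it in a complete cotorsion pair.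
Cutting a finite injective coresolution `0 → M → I⁰ → ⋯ → Iⁿ → 0` into short exact sequences
`0 → Kᵏ → Iᵏ → Kᵏ⁺¹ → 0` of syzygies, a downward induction from the zero syzygy `Kⁿ⁺¹` shows
that every `Kᵏ`, and finally `M`, lies in `W`, since a thick class is closed under kernels
of epimorphisms. Dually, finite projective resolutions are handled by closure under cokernels of
monomorphisms.
-/

lemma isShortExact_kernelLift {X Y Z T : A} {f : X ⟶ Y} {g : Y ⟶ Z} {h : Z ⟶ T}
    (wfg : f ≫ g = 0) (wgh : g ≫ h = 0) [Mono f]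
    (hfg : (ShortComplex.mk f g wfg).Exact) (hgh : (ShortComplex.mk g h wgh).Exact) :
    IsShortExact f (kernel.lift h g wgh) := by
  have w : f ≫ kernel.lift h g wgh = 0 := by ext; simp [wfg]
  refine ⟨w, { exact := ?_, epi_g := (ShortComplex.exact_iff_epi_kernel_lift _).1 hgh }⟩
  exact (ShortComplex.exact_iff_of_epi_of_isIso_of_mono
    { τ₁ := 𝟙 X, τ₂ := 𝟙 Y, τ₃ := kernel.ι h : ShortComplex.mk f _ w ⟶ _ }).2 hfg

lemma isShortExact_cokernelDesc {V X Y Z : A} {e : V ⟶ X} {f : X ⟶ Y} {g : Y ⟶ Z}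
    (wef : e ≫ f = 0) (wfg : f ≫ g = 0) [Epi g]
    (hef : (ShortComplex.mk e f wef).Exact) (hfg : (ShortComplex.mk f g wfg).Exact) :
    IsShortExact (cokernel.desc e f wef) g := by
  have w : cokernel.desc e f wef ≫ g = 0 := by ext; simp [wfg]
  refine ⟨w, { exact := ?_, mono_f := (ShortComplex.exact_iff_mono_cokernel_desc _).1 hef }⟩
  exact (ShortComplex.exact_iff_of_epi_of_isIso_of_mono
    { τ₁ := cokernel.π e, τ₂ := 𝟙 Y, τ₃ := 𝟙 Z : _ ⟶ ShortComplex.mk _ g w }).1 hfg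

lemma ClosedUnderKernelsOfEpis.mem_of_hasFiniteInjectiveDimension {W : Set A}
    (hW : ClosedUnderKernelsOfEpis W) (hinj : ∀ X : A, Injective X → X ∈ W) {M : A}
    (hM : HasFiniteInjectiveDimension M) : M ∈ W := by
  obtain ⟨n, J, ι, hJinj, hJzero, hι, ⟨w, hexact₀⟩, hexact⟩ := hM
  have hsyzygy : ∀ k ≤ n + 1, kernel (J.d k (k + 1)) ∈ W := by
    intro k hk
    induction hk using Nat.decreasingInduction with
    | self => exact hinj _ ((hJzero _ (lt_add_one n)).of_mono (kernel.ι _)).injective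
    | of_succ k hk ih =>
      exact hW _ _ (isShortExact_kernelLift (kernel.condition _) (J.d_comp_d _ _ _)
        (ShortComplex.exact_kernel _) (hexact k)) (hinj _ (hJinj k (by omega))) ih
  exact hW _ _ (isShortExact_kernelLift w (J.d_comp_d _ _ _) hexact₀ (hexact 0))
    (hinj _ (hJinj 0 n.zero_le)) (hsyzygy 1 (by omega))

lemma ClosedUnderCokernelsOfMonos.mem_of_hasFiniteProjectiveDimension {W : Set A}
    (hW : ClosedUnderCokernelsOfMonos W) (hproj : ∀ X : A, Projective X → X ∈ W) {M : A}
    (hM : HasFiniteProjectiveDimension M) : M ∈ W := by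
  obtain ⟨n, P, π, hPproj, hPzero, hπ, ⟨w, hexact₀⟩, hexact⟩ := hM
  have hsyzygy : ∀ k ≤ n + 1, cokernel (P.d (k + 1) k) ∈ W := by
    intro k hk
    induction hk using Nat.decreasingInduction with
    | self => exact hproj _ ((hPzero _ (lt_add_one n)).of_epi (cokernel.π _)).projective
    | of_succ k hk ih =>
      exact hW _ _ (isShortExact_cokernelDesc (P.d_comp_d _ _ _) (cokernel.condition _)
        (hexact k) (ShortComplex.exact_cokernel _)) ih (hproj _ (hPproj k (by omega)))
  exact hW _ _ (isShortExact_cokernelDesc (P.d_comp_d _ _ _) w (hexact 0) hexact₀)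
    (hsyzygy 1 (by omega)) (hproj _ (hPproj 0 n.zero_le))

namespace IsThickClass

variable {W : Set A}

lemma closedUnderKernelsOfEpis_s6 (hW : IsThickClass W) : ClosedUnderKernelsOfEpis W :=
  fun _ _ _ i p hip => (hW.2 i p hip).2.2

lemma closedUnderCokernelsOfMonos_s6 (hW : IsThickClass W) : ClosedUnderCokernelsOfMonos W :=
  fun _ _ _ i p hip => (hW.2 i p hip).1

lemma mem_of_projective (hW : IsThickClass W)
    (hcover : ∀ X : A, ∃ (Y : A) (p : Y ⟶ X), Y ∈ W ∧ Epi p) {X : A} (hX : Projective X) : X ∈ W := by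
  obtain ⟨Y, p, hY, hp⟩ := hcover X
  exact hW.1 Y X (Projective.factorThru (𝟙 X) p) p (Projective.factorThru_comp _ _) hY

end IsThickClass

lemma IsCompleteCotorsionPair.exists_epi_from_left [HasExt.{w} A] {W F : Set A}
    (h : IsCompleteCotorsionPair.{w} W F) (X : A) : ∃ (Y : A) (p : Y ⟶ X), Y ∈ W ∧ Epi p := by
  obtain ⟨_, Y, _, p, _, hY, _, hp⟩ := h.2.1 X
  exact ⟨Y, p, hY, hp.epi_g⟩

theorem finite_dimension_objects_are_trivial_general [HasExt.{w} A]
    (W F : Set A) (h : IsInjectiveCotorsionPair.{w} W F) :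
    (∀ M : A, HasFiniteInjectiveDimension M → M ∈ W) ∧
    (EnoughProjectives A → ∀ M : A, HasFiniteProjectiveDimension M → M ∈ W) := by
  obtain ⟨hcomplete, hthick, hinj⟩ := h
  have hinjW : ∀ X : A, Injective X → X ∈ W := fun X hX => ((hinj X).2 hX).1
  have hprojW : ∀ X : A, Projective X → X ∈ W :=
    fun _ => hthick.mem_of_projective hcomplete.exists_epi_from_left
  exact ⟨fun _ => hthick.closedUnderKernelsOfEpis_s6.mem_of_hasFiniteInjectiveDimension hinjW,
    fun _ _ => hthick.closedUnderCokernelsOfMonos_s6.mem_of_hasFiniteProjectiveDimension hprojW⟩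

theorem finite_dimension_objects_are_trivial [EnoughInjectives A] [HasExt.{w} A]
    (W F : Set A) (h : IsInjectiveCotorsionPair.{w} W F) :
    (∀ M : A, HasFiniteInjectiveDimension M → M ∈ W) ∧
    (EnoughProjectives A → ∀ M : A, HasFiniteProjectiveDimension M → M ∈ W) :=
  finite_dimension_objects_are_trivial_general W F h
end

section
/- Let A be an abelian category with enough injectives and let (Q, W, R) be a Hovey triple which is hereditary (both cotorsion pairs (Q, W ∩ R) and (Q ∩ W, R) are hereditary) and weak injective (Q ∩ W ∩ R equals the class of injective objects of A). Then (Q ∩ W, R) and (Q, W ∩ R) are injective cotorsion pairs; that is, Q ∩ W is thick with (Q ∩ W) ∩ R the class of injective objects, and Q is thick with Q ∩ (W ∩ R) the class of injective objects. -/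
open CategoryTheory CategoryTheory.Limits

universe w v u

variable {A : Type u} [Category.{v} A] [Abelian A]

/-!
The left class of a cotorsion pair is always closed under retracts and extensions, and
heredity adds closure under kernels of epimorphisms. The remaining closure, under cokernels
of monomorphisms `0 → X → Y → Z → 0` with `X, Y` in the left class, comes from the core being
injective: a special preenvelope `0 → X → I → F' → 0` has `I` in the core, so `I` is injective
and every map from `X` to the right class factors through `X → I` and hence extends along
`X → Y`; by the long exact `Ext` sequence this kills `Ext¹(Z, -)` on the right class.
-/

open CategoryTheory CategoryTheory.Abelian

section CotorsionPair

variable [HasExt.{w} A] {F C : Set A}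

namespace IsCotorsionPair

lemma mem_left_iff_forall_eq_zero (hcp : IsCotorsionPair.{w} F C) (X : A) :
    X ∈ F ↔ ∀ c ∈ C, ∀ e : Ext X c 1, e = 0 := by
  simp only [hcp.1 X, Ext1Zero, subsingleton_iff_forall_eq (0 : Ext X _ 1)]

lemma mem_left_of_retract_s8 (hcp : IsCotorsionPair.{w} F C) {X Y : A} (s : Y ⟶ X) (r : X ⟶ Y)
    (hsr : s ≫ r = 𝟙 Y) (hX : X ∈ F) : Y ∈ F := by
  rw [hcp.mem_left_iff_forall_eq_zero] at hX ⊢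
  intro c hc e
  calc e = (Ext.mk₀ (s ≫ r)).comp e (zero_add 1) := by rw [hsr, Ext.mk₀_id_comp]
    _ = (Ext.mk₀ s).comp ((Ext.mk₀ r).comp e (zero_add 1)) (zero_add 1) :=
        (Ext.mk₀_comp_mk₀_assoc s r e).symm
    _ = 0 := by rw [hX c hc ((Ext.mk₀ r).comp e (zero_add 1)), Ext.comp_zero]

lemma mem_left_of_shortExact_s8 (hcp : IsCotorsionPair.{w} F C) {X Y Z : A} {i : X ⟶ Y}
    {p : Y ⟶ Z} (hse : IsShortExact i p) (hX : X ∈ F) (hZ : Z ∈ F) : Y ∈ F := by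
  obtain ⟨_, hS⟩ := hse
  rw [hcp.mem_left_iff_forall_eq_zero] at hX hZ ⊢
  intro c hc e
  obtain ⟨e', rfl⟩ := Ext.contravariant_sequence_exact₂ hS c e (hX c hc _)
  rw [hZ c hc e', Ext.comp_zero]

end IsCotorsionPair

namespace IsCompleteCotorsionPair

variable (hcp : IsCompleteCotorsionPair.{w} F C) (hinj : ∀ T ∈ F, T ∈ C → Injective T)
include hcp hinj

lemma exists_ext_zero_extension_of_mono {X Y c : A} (i : X ⟶ Y) [Mono i] (hX : X ∈ F)
    (hc : c ∈ C) (x : Ext X c 0) : ∃ y : Ext Y c 0, (Ext.mk₀ i).comp y (zero_add 0) = x := by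
  obtain ⟨I, F', j, q, hI, hF', hse⟩ := hcp.2.2 X
  have := hinj I (hcp.1.mem_left_of_shortExact_s8 hse hX hF') hI
  obtain ⟨_, hS⟩ := hse
  obtain ⟨z, rfl⟩ := Ext.contravariant_sequence_exact₁ hS c x (add_zero 1)
    (((hcp.1.mem_left_iff_forall_eq_zero F').1 hF') c hc _)
  refine ⟨(Ext.mk₀ (Injective.factorThru j i)).comp z (zero_add 0), ?_⟩
  rw [Ext.mk₀_comp_mk₀_assoc, Injective.comp_factorThru]

lemma mem_left_of_shortExact_of_mem_left {X Y Z : A} {i : X ⟶ Y} {p : Y ⟶ Z}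
    (hse : IsShortExact i p) (hX : X ∈ F) (hY : Y ∈ F) : Z ∈ F := by
  obtain ⟨_, hS⟩ := hse
  have := hS.mono_f
  rw [hcp.1.mem_left_iff_forall_eq_zero] at hY ⊢
  intro c hc x
  obtain ⟨x₁, rfl⟩ := Ext.contravariant_sequence_exact₃ hS c x (hY c hc _) (add_zero 1)
  obtain ⟨y, rfl⟩ := hcp.exists_ext_zero_extension_of_mono hinj i hX hc x₁
  exact hS.extClass_comp_assoc y

lemma isThickClass_left_s8 (hker : ClosedUnderKernelsOfEpis F) : IsThickClass F :=
  ⟨fun _ _ s r hsr hX => hcp.1.mem_left_of_retract_s8 s r hsr hX,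
    fun _ _ _ _ _ hse => ⟨hcp.mem_left_of_shortExact_of_mem_left hinj hse,
      hcp.1.mem_left_of_shortExact_s8 hse, hker _ _ hse⟩⟩

end IsCompleteCotorsionPair

lemma IsCompleteCotorsionPair.isInjectiveCotorsionPair (hcp : IsCompleteCotorsionPair.{w} F C)
    (hker : ClosedUnderKernelsOfEpis F) (hcore : ∀ X : A, (X ∈ F ∧ X ∈ C) ↔ Injective X) :
    IsInjectiveCotorsionPair.{w} F C :=
  ⟨hcp, hcp.isThickClass_left_s8 (fun T hF hC => (hcore T).1 ⟨hF, hC⟩) hker, hcore⟩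

end CotorsionPair

theorem weak_injective_hereditary_converse_general [HasExt.{w} A]
    (Q W R : Set A) (h : IsHoveyTriple.{w} Q W R)
    (hher1 : ClosedUnderKernelsOfEpis Q ∧ ClosedUnderCokernelsOfMonos (W ∩ R))
    (hher2 : ClosedUnderKernelsOfEpis (Q ∩ W) ∧ ClosedUnderCokernelsOfMonos R)
    (hweak : ∀ X : A, (X ∈ Q ∧ X ∈ W ∧ X ∈ R) ↔ Injective X) :
    IsInjectiveCotorsionPair.{w} (Q ∩ W) R ∧ IsInjectiveCotorsionPair.{w} Q (W ∩ R) :=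
  ⟨h.2.2.isInjectiveCotorsionPair hher2.1 fun X => and_assoc.trans (hweak X),
    h.2.1.isInjectiveCotorsionPair hher1.1 hweak⟩

theorem weak_injective_hereditary_converse [EnoughInjectives A] [HasExt.{w} A]
    (Q W R : Set A) (h : IsHoveyTriple.{w} Q W R)
    (hher1 : ClosedUnderKernelsOfEpis Q ∧ ClosedUnderCokernelsOfMonos (W ∩ R))
    (hher2 : ClosedUnderKernelsOfEpis (Q ∩ W) ∧ ClosedUnderCokernelsOfMonos R)
    (hweak : ∀ X : A, (X ∈ Q ∧ X ∈ W ∧ X ∈ R) ↔ Injective X) :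
    IsInjectiveCotorsionPair.{w} (Q ∩ W) R ∧ IsInjectiveCotorsionPair.{w} Q (W ∩ R) :=
  weak_injective_hereditary_converse_general Q W R h hher1 hher2 hweak
end

section
/- Let A be an abelian category with enough injectives, let (W, F) be an injective cotorsion pair, and let W' be a thick class of objects of A containing W. Then an object A lies in W' if and only if there exists a short exact sequence 0 → A → T → W → 0 with T ∈ W' ∩ F and W ∈ W. (That is, W_{W' ∩ F} = W'.) -/
open CategoryTheory CategoryTheory.Limits

universe w v u

variable {A : Type u} [Category.{v} A] [Abelian A]

/-- `T` is an `F`-thick class: a subclass of `F` closed under direct summands and satisfying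
two-out-of-three on short exact sequences all of whose terms lie in `F`. -/
def IsFThick (F T : Set A) : Prop :=
  (∀ (X Y : A) (s : Y ⟶ X) (r : X ⟶ Y), s ≫ r = 𝟙 Y → X ∈ T → Y ∈ T) ∧
  (∀ ⦃X Y Z : A⦄ (i : X ⟶ Y) (p : Y ⟶ Z), IsShortExact i p →
    X ∈ F → Y ∈ F → Z ∈ F →
    ((X ∈ T → Y ∈ T → Z ∈ T) ∧ (X ∈ T → Z ∈ T → Y ∈ T) ∧ (Y ∈ T → Z ∈ T → X ∈ T)))

/-- `WClass W T` is the class of all objects `X` admitting a short exact sequence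
`0 → X → T₀ → W₀ → 0` with `T₀ ∈ T` and `W₀ ∈ W`. -/
def WClass (W T : Set A) : Set A :=
  {X : A | ∃ (To Wo : A) (i : X ⟶ To) (p : To ⟶ Wo), IsShortExact i p ∧ To ∈ T ∧ Wo ∈ W}

namespace IsThickClass

variable {W : Set A} {X Y Z : A} {i : X ⟶ Y} {p : Y ⟶ Z}

theorem mem_middle (hW : IsThickClass W) (hip : IsShortExact i p) (hX : X ∈ W) (hZ : Z ∈ W) :
    Y ∈ W :=
  (hW.2 i p hip).2.1 hX hZ

theorem mem_left (hW : IsThickClass W) (hip : IsShortExact i p) (hY : Y ∈ W) (hZ : Z ∈ W) :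
    X ∈ W :=
  (hW.2 i p hip).2.2 hY hZ

end IsThickClass

theorem IsCompleteCotorsionPair.exists_special_preenvelope [HasExt.{w} A] {L R : Set A}
    (h : IsCompleteCotorsionPair.{w} L R) (X : A) :
    ∃ (T W₀ : A) (i : X ⟶ T) (p : T ⟶ W₀), IsShortExact i p ∧ T ∈ R ∧ W₀ ∈ L := by
  obtain ⟨T, W₀, i, p, hT, hW₀, hip⟩ := h.2.2 X
  exact ⟨T, W₀, i, p, hip, hT, hW₀⟩

theorem WClass_of_thick_class_general [HasExt.{w} A] (W F : Set A)
    (h : IsInjectiveCotorsionPair.{w} W F)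
    (W' : Set A) (hthick : IsThickClass W') (hsub : W ⊆ W') :
    ∀ X : A, X ∈ W' ↔ ∃ (To Wo : A) (i : X ⟶ To) (p : To ⟶ Wo),
      IsShortExact i p ∧ (To ∈ W' ∧ To ∈ F) ∧ Wo ∈ W := by
  intro X
  constructor
  · intro hX
    obtain ⟨T, W₀, i, p, hip, hT, hW₀⟩ := h.1.exists_special_preenvelope X
    exact ⟨T, W₀, i, p, hip, ⟨hthick.mem_middle hip hX (hsub hW₀), hT⟩, hW₀⟩
  · rintro ⟨T, W₀, i, p, hip, ⟨hT, -⟩, hW₀⟩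
    exact hthick.mem_left hip hT (hsub hW₀)

theorem WClass_of_thick_class [EnoughInjectives A] [HasExt.{w} A] (W F : Set A)
    (h : IsInjectiveCotorsionPair.{w} W F)
    (W' : Set A) (hthick : IsThickClass W') (hsub : W ⊆ W') :
    ∀ X : A, X ∈ W' ↔ ∃ (To Wo : A) (i : X ⟶ To) (p : To ⟶ Wo),
      IsShortExact i p ∧ (To ∈ W' ∧ To ∈ F) ∧ Wo ∈ W :=
  WClass_of_thick_class_general W F h W' hthick hsub
end

section
/- Let R be a ring and let G be a Gorenstein projective object of the category Ch(R) of chain complexes of (left) R-modules. Then for every integer n, the R-module G_n is Gorenstein projective. -/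
open CategoryTheory CategoryTheory.Limits

universe w v u

variable {A : Type u} [Category.{v} A] [Abelian A]

/-- `M` is Gorenstein projective: `M = Z₀ Q` for some exact complex `Q` of projectives which
remains exact after applying `Hom(-, P)` for every projective object `P`. -/
def IsGorensteinProjective (M : A) : Prop :=
  ∃ Q : ChainComplex A ℤ,
    (∀ n : ℤ, Projective (Q.X n)) ∧
    (∀ n : ℤ, (ShortComplex.mk (Q.d (n + 1) n) (Q.d n (n - 1)) (Q.d_comp_d _ _ _)).Exact) ∧
    (∃ (ι : M ⟶ Q.X 0) (w : ι ≫ Q.d 0 (-1) = 0),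
      Mono ι ∧ (ShortComplex.mk ι (Q.d 0 (-1)) w).Exact) ∧
    (∀ (P : A), Projective P → ∀ (n : ℤ) (f : Q.X n ⟶ P), Q.d (n + 1) n ≫ f = 0 →
      ∃ g : Q.X (n - 1) ⟶ P, Q.d n (n - 1) ≫ g = f)

/-!
For each `n`, evaluation `K ↦ Kₙ` is an exact functor `Ch(A) ⥤ A`, so it carries a complete
resolution `Q` of `G` to an exact complex `Qₙ` with `Gₙ = Z₀(Qₙ)`. The disk `D(P)`, that is `P` in
degrees `n + 1` and `n` joined by the identity, both represents `K ↦ Hom(Kₙ, P)` and corepresents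
`K ↦ Hom(P, Kₙ₊₁)`. The first property shows that `Hom(Qₙ, P) ≅ Hom(Q, D(P))`, which is exact when
`P` is projective, and the second one that `D(P)` is then projective. Since `D` also preserves
epimorphisms, the first property shows as well that evaluation preserves projective objects.
-/

namespace CategoryTheory

lemma Functor.CorepresentableBy.projective {𝒞 𝒟 : Type*} [Category* 𝒞]
    [Category* 𝒟] {F : 𝒞 ⥤ 𝒟} [F.PreservesEpimorphisms] {X : 𝒟} [Projective X] {Y : 𝒞}
    (e : (F ⋙ coyoneda.obj (Opposite.op X)).CorepresentableBy Y) : Projective Y where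
  factors {E M} φ π _ := by
    obtain ⟨σ, hσ⟩ := Projective.factors (e.homEquiv φ) (F.map π)
    refine ⟨e.homEquiv.symm σ, e.homEquiv.injective ?_⟩
    rw [e.homEquiv_comp, Equiv.apply_symm_apply]
    exact hσ

lemma Functor.RepresentableBy.exists_map_comp_eq {𝒞 𝒟 : Type*}
    [Category.{v} 𝒞] [Category.{v} 𝒟] [HasZeroMorphisms 𝒞] [HasZeroMorphisms 𝒟] {F : 𝒞 ⥤ 𝒟}
    [F.PreservesZeroMorphisms] {X : 𝒟} {Y : 𝒞} (e : (F.op ⋙ yoneda.obj X).RepresentableBy Y)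
    {U V W : 𝒞} {a : U ⟶ V} {b : V ⟶ W}
    (hab : ∀ g : V ⟶ Y, a ≫ g = 0 → ∃ g' : W ⟶ Y, b ≫ g' = g)
    (g : F.obj V ⟶ X) (hg : F.map a ≫ g = 0) : ∃ g' : F.obj W ⟶ X, F.map b ≫ g' = g := by
  have hzero : a ≫ e.homEquiv.symm g = 0 := calc
    a ≫ e.homEquiv.symm g = e.homEquiv.symm (F.map a ≫ g) := e.comp_homEquiv_symm _ _
    _ = (0 : U ⟶ V) ≫ e.homEquiv.symm g := by
      rw [hg, e.comp_homEquiv_symm]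
      simp
    _ = 0 := zero_comp
  obtain ⟨g', hg'⟩ := hab _ hzero
  refine ⟨e.homEquiv g', ?_⟩
  have := e.homEquiv_comp b g'
  rw [hg', Equiv.apply_symm_apply] at this
  exact this.symm

end CategoryTheory

namespace HomologicalComplex

section

variable {C : Type*} [Category* C] [HasZeroMorphisms C] [HasZeroObject C]
  {ι : Type*} {c : ComplexShape ι} {i₀ i₁ : ι} (hi₀₁ : c.Rel i₀ i₁) (h : i₀ ≠ i₁)

section

variable {X₀ X₁ : C} {f : X₀ ⟶ X₁} {K : HomologicalComplex C c}
  (φ₀ : K.X i₀ ⟶ X₀) (φ₁ : K.X i₁ ⟶ X₁) (comm : K.d i₀ i₁ ≫ φ₁ = φ₀ ≫ f)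
  (hφ : ∀ k, c.Rel k i₀ → K.d k i₀ ≫ φ₀ = 0)

open scoped Classical in
noncomputable def mkHomToDouble : K ⟶ double f hi₀₁ where
  f k :=
    if hk₀ : k = i₀ then
      eqToHom (by rw [hk₀]) ≫ φ₀ ≫ (doubleXIso₀ f hi₀₁).inv ≫ eqToHom (by rw [hk₀])
    else if hk₁ : k = i₁ then
      eqToHom (by rw [hk₁]) ≫ φ₁ ≫ (doubleXIso₁ f hi₀₁ h).inv ≫ eqToHom (by rw [hk₁])
    else 0
  comm' k₀ k₁ hk := by
    by_cases h₁ : k₁ = i₁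
    · subst h₁
      obtain rfl := c.prev_eq hk hi₀₁
      simp [dif_neg h.symm, double_d f hi₀₁ h, reassoc_of% comm]
    · by_cases h₀ : k₁ = i₀
      · subst h₀
        simp [reassoc_of% (hφ k₀ hk), double_d_eq_zero₁ _ _ _ _ h]
      · apply (isZero_double_X f hi₀₁ k₁ h₀ h₁).eq_of_tgt

@[simp]
lemma mkHomToDouble_f₀ :
    (mkHomToDouble hi₀₁ h φ₀ φ₁ comm hφ).f i₀ = φ₀ ≫ (doubleXIso₀ f hi₀₁).inv := by
  simp [mkHomToDouble]

@[simp]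
lemma mkHomToDouble_f₁ :
    (mkHomToDouble hi₀₁ h φ₀ φ₁ comm hφ).f i₁ = φ₁ ≫ (doubleXIso₁ f hi₀₁ h).inv := by
  simp [mkHomToDouble, dif_neg h.symm]

end

variable (X : C)

@[simps]
noncomputable def toDoubleIdEquiv (K : HomologicalComplex C c) :
    (K ⟶ double (𝟙 X) hi₀₁) ≃ (K.X i₁ ⟶ X) where
  toFun g := g.f i₁ ≫ (doubleXIso₁ _ hi₀₁ h).hom
  invFun φ₁ := mkHomToDouble hi₀₁ h (K.d i₀ i₁ ≫ φ₁) φ₁ (by simp) (by simp)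
  left_inv g := by
    ext
    · rw [mkHomToDouble_f₀, ← g.comm_assoc, double_d _ _ h]
      simp
    · simp
  right_inv _ := by simp

noncomputable def evalOpCompYonedaRepresentableByDoubleId :
    ((eval C c i₁).op ⋙ yoneda.obj X).RepresentableBy (double (𝟙 X) hi₀₁) where
  homEquiv := toDoubleIdEquiv hi₀₁ h X _
  homEquiv_comp _ _ := Category.assoc _ _ _

noncomputable def doubleIdMap {X Y : C} (g : X ⟶ Y) :
    double (𝟙 X) hi₀₁ ⟶ double (𝟙 Y) hi₀₁ :=
  (toDoubleIdEquiv hi₀₁ h Y _).symm ((doubleXIso₁ _ hi₀₁ h).hom ≫ g)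

lemma toDoubleIdEquiv_comp_doubleIdMap {X Y : C} (g : X ⟶ Y) {K : HomologicalComplex C c}
    (ψ : K ⟶ double (𝟙 X) hi₀₁) :
    toDoubleIdEquiv hi₀₁ h Y K (ψ ≫ doubleIdMap hi₀₁ h g) = toDoubleIdEquiv hi₀₁ h X K ψ ≫ g := by
  simp [doubleIdMap]

lemma epi_doubleIdMap {X Y : C} (g : X ⟶ Y) [Epi g] : Epi (doubleIdMap hi₀₁ h g) := by
  refine epi_of_epi_f _ fun k => ?_
  by_cases h₀ : k = i₀
  · subst h₀
    rw [doubleIdMap, toDoubleIdEquiv_symm_apply, mkHomToDouble_f₀, double_d _ _ h]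
    simp only [Category.id_comp, Category.assoc, Iso.inv_hom_id_assoc]
    infer_instance
  · by_cases h₁ : k = i₁
    · subst h₁
      rw [doubleIdMap, toDoubleIdEquiv_symm_apply, mkHomToDouble_f₁]
      infer_instance
    · exact ⟨fun _ _ _ => (isZero_double_X _ hi₀₁ k h₀ h₁).eq_of_src _ _⟩

end

variable {C : Type*} [Category* C] [Abelian C] {ι : Type*} {c : ComplexShape ι} {i₀ i₁ : ι}

lemma projective_double_id (hi₀₁ : c.Rel i₀ i₁) (h : i₀ ≠ i₁) (P : C) [Projective P] : Projective (double (𝟙 P) hi₀₁) :=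
  (evalCompCoyonedaCorepresentableByDoubleId hi₀₁ h P).projective

lemma projective_X_of_projective (hi₀₁ : c.Rel i₀ i₁) (h : i₀ ≠ i₁)
    (K : HomologicalComplex C c) [Projective K] :
    Projective (K.X i₁) where
  factors {Y X} f e _ := by
    have := epi_doubleIdMap hi₀₁ h e
    obtain ⟨ψ, hψ⟩ := Projective.factors ((toDoubleIdEquiv hi₀₁ h X K).symm f)
      (doubleIdMap hi₀₁ h e)
    exact ⟨toDoubleIdEquiv hi₀₁ h Y K ψ, by
      rw [← toDoubleIdEquiv_comp_doubleIdMap, hψ, Equiv.apply_symm_apply]⟩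

end HomologicalComplex

theorem IsGorensteinProjective.map {𝒞 𝒟 : Type*} [Category.{v} 𝒞] [Category.{v} 𝒟]
    [Abelian 𝒞] [Abelian 𝒟] (F : 𝒞 ⥤ 𝒟) [PreservesFiniteLimits F] [PreservesFiniteColimits F]
    [F.PreservesProjectiveObjects] (D : 𝒟 → 𝒞)
    (rep : ∀ P, (F.op ⋙ yoneda.obj P).RepresentableBy (D P))
    (hD : ∀ P, Projective P → Projective (D P)) {M : 𝒞} (hM : IsGorensteinProjective M) :
    IsGorensteinProjective (F.obj M) := by
  obtain ⟨Q, hQ, hexact, ⟨ι, w, hι, hιexact⟩, hlift⟩ := hM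
  refine ⟨(F.mapHomologicalComplex _).obj Q, fun m => F.projective_obj_of_projective (hQ m),
    fun m => (hexact m).map F, ⟨F.map ι, ?_, ?_, hιexact.map F⟩, fun P hP m g hg => ?_⟩
  · exact (F.map_comp ι _).symm.trans ((congrArg F.map w).trans (F.map_zero _ _))
  · exact F.map_mono ι
  · exact (rep P).exists_map_comp_eq (hlift _ (hD P hP) m) g hg

theorem IsGorensteinProjective.chainComplex_X {G : ChainComplex A ℤ}
    (hG : IsGorensteinProjective G) (n : ℤ) : IsGorensteinProjective (G.X n) := by
  have hn : (ComplexShape.down ℤ).Rel (n + 1) n := by simp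
  have hne : n + 1 ≠ n := by omega
  have : (HomologicalComplex.eval A _ n).PreservesProjectiveObjects :=
    ⟨fun {K} _ => HomologicalComplex.projective_X_of_projective hn hne K⟩
  exact hG.map (HomologicalComplex.eval A _ n) (fun P => HomologicalComplex.double (𝟙 P) hn)
    (HomologicalComplex.evalOpCompYonedaRepresentableByDoubleId hn hne)
    (fun P _ => HomologicalComplex.projective_double_id hn hne P)

theorem gorenstein_projective_complex_degreewise {R : Type u} [Ring R]
    (G : ChainComplex (ModuleCat.{u} R) ℤ) (hG : IsGorensteinProjective G) :
    ∀ n : ℤ, IsGorensteinProjective (G.X n) :=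
  hG.chainComplex_X
end
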